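/- arXiv:1809.10491 — 3 statements merged into one kernel-verified Lean document; each statement's English description precedes it below -/
import Mathlib

section
/- (Lemma 3, rank-one projection condition.) Let w ∈ R^d be a unit vector and let X ∈ R^{d×d} be symmetric positive semidefinite. Let η > 0 and α ≥ 0 with ηα < 1, set W := (1 − ηα) w w^⊤ + η X, and let w' be a unit leading eigenvector of W. If w^⊤ X w ≥ (λ1(X) + λ2(X) + α)/2, then w' w'^⊤ = Π_S[W], i.e., the rank-one matrix w' w'^⊤ is the Euclidean projection of W onto the spectrahedron. -/
open Matrix MeasureTheory ProbabilityTheory BigOperators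

/-- The `k`-th largest eigenvalue (0-indexed: `eigk 0` is the largest) of a real
matrix, defined via the sorted eigenvalues of a Hermitian (= symmetric) matrix. -/
noncomputable def eigk {d : ℕ} (k : ℕ) (A : Matrix (Fin d) (Fin d) ℝ) : ℝ :=
  if h : k < d then
    (if hA : A.IsHermitian then
      (hA.eigenvalues ∘ Tuple.sort hA.eigenvalues) (Fin.rev ⟨k, h⟩) else 0)
  else 0

/-- Euclidean norm of a vector in `ℝ^d`. -/
noncomputable def vnorm {d : ℕ} (v : Fin d → ℝ) : ℝ := Real.sqrt (v ⬝ᵥ v)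

/-- Frobenius norm of a `d × d` real matrix. -/
noncomputable def frob {d : ℕ} (A : Matrix (Fin d) (Fin d) ℝ) : ℝ :=
  Real.sqrt (∑ i, ∑ j, (A i j)^2)

/-- Spectral norm (largest singular value) of a `d × d` real matrix, as the
supremum of `‖A v‖` over unit vectors `v`. -/
noncomputable def spec {d : ℕ} (A : Matrix (Fin d) (Fin d) ℝ) : ℝ :=
  sSup {r : ℝ | ∃ v : Fin d → ℝ, vnorm v = 1 ∧ r = vnorm (A.mulVec v)}

/-- The spectrahedron: positive semidefinite matrices of unit trace. -/
def Spectrahedron (d : ℕ) : Set (Matrix (Fin d) (Fin d) ℝ) :=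
  {M | M.PosSemidef ∧ M.trace = 1}

/-- `P` is the Euclidean (Frobenius-norm) projection of `W` onto the spectrahedron. -/
def IsProjSpectrahedron {d : ℕ} (W P : Matrix (Fin d) (Fin d) ℝ) : Prop :=
  P ∈ Spectrahedron d ∧ ∀ M ∈ Spectrahedron d, frob (P - W) ≤ frob (M - W)

/-!
Write `t = λ₁(W)` and `P = w'w'ᵀ`. Since `S` is convex, `P = Π_S[W]` as soon as
`⟨W - P, M⟩ ≤ ⟨W - P, P⟩ = t - 1` for every `M ∈ S`, and this holds when `W - P ≼ (t - 1) I`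
(pair `(t - 1) I - (W - P) ≽ 0` with `M ≽ 0`, `tr M = 1`). As `w'` is an eigenvector for `t`,
that reduces to `uᵀWu ≤ t - 1` for unit `u ⊥ w'`. For such `u`, Bessel's inequality for `w`
against the orthonormal pair `u, w'` and Ky Fan's inequality `uᵀXu + w'ᵀXw' ≤ λ₁(X) + λ₂(X)` give
`uᵀWu + t ≤ (1 - ηα) + η(λ₁(X) + λ₂(X)) ≤ 1 - 2ηα + 2η wᵀXw ≤ 2t - 1`,
using the hypothesis on `wᵀXw` and then `t ≥ wᵀWw = 1 - ηα + η wᵀXw`.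
-/

lemma dotProduct_self_eq_one_of_vnorm_eq_one {d : ℕ} {v : Fin d → ℝ} (h : vnorm v = 1) :
    v ⬝ᵥ v = 1 := by
  rwa [vnorm, Real.sqrt_eq_one] at h

lemma sq_dotProduct_add_sq_dotProduct_le {n : Type*} [Fintype n] {u v : n → ℝ}
    (hu : u ⬝ᵥ u = 1) (hv : v ⬝ᵥ v = 1) (huv : u ⬝ᵥ v = 0) (x : n → ℝ) :
    (u ⬝ᵥ x) ^ 2 + (v ⬝ᵥ x) ^ 2 ≤ x ⬝ᵥ x := by
  have hres : (x - (u ⬝ᵥ x) • u - (v ⬝ᵥ x) • v) ⬝ᵥ (x - (u ⬝ᵥ x) • u - (v ⬝ᵥ x) • v) =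
      x ⬝ᵥ x - (u ⬝ᵥ x) ^ 2 - (v ⬝ᵥ x) ^ 2 := by
    simp only [dotProduct_sub, sub_dotProduct, dotProduct_smul, smul_dotProduct, smul_eq_mul,
      hu, hv, huv, dotProduct_comm x u, dotProduct_comm x v, dotProduct_comm v u]
    ring
  linarith [hres ▸ dotProduct_self_star_nonneg (x - (u ⬝ᵥ x) • u - (v ⬝ᵥ x) • v)]

lemma dotProduct_mulVec_le_of_forall_smul {n : Type*} [Fintype n] {A : Matrix n n ℝ} {s : ℝ}
    {x : n → ℝ} (h : ∀ c : ℝ, (c • x) ⬝ᵥ (c • x) = 1 → (c • x) ⬝ᵥ A *ᵥ (c • x) ≤ s) :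
    x ⬝ᵥ A *ᵥ x ≤ s * (x ⬝ᵥ x) := by
  rcases eq_or_ne x 0 with rfl | hx
  · simp
  have hpos : 0 < x ⬝ᵥ x :=
    lt_of_le_of_ne (dotProduct_self_star_nonneg x) (Ne.symm (dotProduct_self_eq_zero.not.mpr hx))
  set r := √(x ⬝ᵥ x)
  have hr : 0 < r := Real.sqrt_pos.mpr hpos
  have hrr : r * r = x ⬝ᵥ x := Real.mul_self_sqrt hpos.le
  have hunit : (r⁻¹ • x) ⬝ᵥ (r⁻¹ • x) = 1 := by
    rw [smul_dotProduct, dotProduct_smul, ← hrr, smul_eq_mul, smul_eq_mul]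
    field_simp
  have := h r⁻¹ hunit
  rw [mulVec_smul, smul_dotProduct, dotProduct_smul, smul_eq_mul, smul_eq_mul] at this
  rw [← hrr]
  calc x ⬝ᵥ A *ᵥ x = r * r * (r⁻¹ * (r⁻¹ * (x ⬝ᵥ A *ᵥ x))) := by field_simp
    _ ≤ r * r * s := by gcongr
    _ = s * (r * r) := mul_comm _ _

lemma vecMulVec_self_mulVec {n : Type*} [Fintype n] (v x : n → ℝ) :
    vecMulVec v v *ᵥ x = (v ⬝ᵥ x) • v := by
  rw [vecMulVec_mulVec, op_smul_eq_smul]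

namespace Matrix

variable {n : Type*} [Fintype n]

lemma IsHermitian.dotProduct_mulVec_comm {A : Matrix n n ℝ} (hA : A.IsHermitian) (x y : n → ℝ) :
    x ⬝ᵥ A *ᵥ y = y ⬝ᵥ A *ᵥ x := by
  rw [dotProduct_mulVec, ← mulVec_transpose, ← conjTranspose_eq_transpose_of_trivial, hA.eq,
    dotProduct_comm]

variable [DecidableEq n] {A : Matrix n n ℝ}

lemma IsHermitian.eigenvector_dotProduct_self (hA : A.IsHermitian) (i : n) :
    ⇑(hA.eigenvectorBasis i) ⬝ᵥ ⇑(hA.eigenvectorBasis i) = 1 :=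
  hA.eigenvectorBasis.inner_eq_one i

lemma IsHermitian.sum_sq_eigenvector_dotProduct (hA : A.IsHermitian) (x : n → ℝ) :
    ∑ i, (⇑(hA.eigenvectorBasis i) ⬝ᵥ x) ^ 2 = x ⬝ᵥ x := by
  have := hA.eigenvectorBasis.sum_inner_mul_inner (WithLp.toLp 2 x) (WithLp.toLp 2 x)
  simp only [EuclideanSpace.inner_eq_star_dotProduct, star_trivial] at this
  rw [← this]
  exact Finset.sum_congr rfl fun i _ => by rw [sq, dotProduct_comm x]

lemma IsHermitian.dotProduct_mulVec_self_eq_sum (hA : A.IsHermitian) (x : n → ℝ) :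
    x ⬝ᵥ A *ᵥ x = ∑ i, hA.eigenvalues i * (⇑(hA.eigenvectorBasis i) ⬝ᵥ x) ^ 2 := by
  have := hA.eigenvectorBasis.sum_inner_mul_inner (WithLp.toLp 2 x) (WithLp.toLp 2 (A *ᵥ x))
  simp only [EuclideanSpace.inner_eq_star_dotProduct, star_trivial] at this
  rw [dotProduct_comm, ← this]
  refine Finset.sum_congr rfl fun i _ => ?_
  rw [dotProduct_comm (A *ᵥ x), hA.dotProduct_mulVec_comm, hA.mulVec_eigenvectorBasis,
    dotProduct_smul, smul_eq_mul, dotProduct_comm x]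
  ring

end Matrix

lemma eigk_eq {d k : ℕ} {A : Matrix (Fin d) (Fin d) ℝ} (hA : A.IsHermitian) (hk : k < d) :
    eigk k A = hA.eigenvalues (Tuple.sort hA.eigenvalues (Fin.rev ⟨k, hk⟩)) := by
  rw [eigk, dif_pos hk, dif_pos hA]
  rfl

lemma eigenvalues_le_eigk {d k : ℕ} {A : Matrix (Fin d) (Fin d) ℝ} (hA : A.IsHermitian)
    (i : Fin d) (hk : k ≤ Fin.rev ((Tuple.sort hA.eigenvalues)⁻¹ i)) :
    hA.eigenvalues i ≤ eigk k A := by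
  have hkd : k < d := by omega
  rw [eigk_eq hA hkd]
  obtain ⟨j, rfl⟩ := (Tuple.sort hA.eigenvalues).surjective i
  simp only [Equiv.Perm.coe_inv, Equiv.symm_apply_apply] at hk
  refine Tuple.monotone_sort hA.eigenvalues ?_
  simp only [Fin.le_def, Fin.val_rev] at hk ⊢
  omega

lemma eigenvalues_le_eigk_zero {d : ℕ} {A : Matrix (Fin d) (Fin d) ℝ} (hA : A.IsHermitian)
    (i : Fin d) : hA.eigenvalues i ≤ eigk 0 A :=
  eigenvalues_le_eigk hA i (Nat.zero_le _)

lemma eigk_one_le_eigk_zero {d : ℕ} {A : Matrix (Fin d) (Fin d) ℝ} (hA : A.IsHermitian)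
    (hd : 1 < d) : eigk 1 A ≤ eigk 0 A :=
  eigk_eq hA hd ▸ eigenvalues_le_eigk_zero hA _

lemma exists_forall_ne_eigenvalues_le_eigk_one {d : ℕ} {A : Matrix (Fin d) (Fin d) ℝ}
    (hA : A.IsHermitian) (hd : 1 < d) :
    ∃ i₀, ∀ i ≠ i₀, hA.eigenvalues i ≤ eigk 1 A := by
  refine ⟨Tuple.sort hA.eigenvalues (Fin.rev ⟨0, by omega⟩), fun i hi => ?_⟩
  refine eigenvalues_le_eigk hA i (Nat.one_le_iff_ne_zero.mpr fun h => hi ?_)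
  exact Equiv.Perm.inv_eq_iff_eq.mp (Fin.rev_eq_iff.mp (Fin.ext h))

lemma sum_mul_le_add_of_sum_eq_two {ι : Type*} [Fintype ι] {μ c : ι → ℝ} {a b : ℝ} (i₀ : ι)
    (hμ₀ : μ i₀ ≤ a) (hμ : ∀ i ≠ i₀, μ i ≤ b) (hba : b ≤ a) (hc : ∀ i, 0 ≤ c i)
    (hc₀ : c i₀ ≤ 1) (hsum : ∑ i, c i = 2) : ∑ i, μ i * c i ≤ a + b := by
  classical
  rw [← Finset.add_sum_erase _ _ (Finset.mem_univ i₀)] at hsum ⊢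
  have hrest : ∑ i ∈ Finset.univ.erase i₀, μ i * c i ≤ b * ∑ i ∈ Finset.univ.erase i₀, c i := by
    rw [Finset.mul_sum]
    exact Finset.sum_le_sum fun i hi =>
      mul_le_mul_of_nonneg_right (hμ i (Finset.ne_of_mem_erase hi)) (hc i)
  rw [show ∑ i ∈ Finset.univ.erase i₀, c i = 2 - c i₀ by linarith] at hrest
  nlinarith [mul_le_mul_of_nonneg_right hμ₀ (hc i₀),
    mul_nonneg (sub_nonneg.2 hba) (sub_nonneg.2 hc₀)]

lemma dotProduct_mulVec_self_le_eigk_zero {d : ℕ} {A : Matrix (Fin d) (Fin d) ℝ}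
    (hA : A.IsHermitian) (x : Fin d → ℝ) : x ⬝ᵥ A *ᵥ x ≤ eigk 0 A * (x ⬝ᵥ x) := by
  rw [hA.dotProduct_mulVec_self_eq_sum, ← hA.sum_sq_eigenvector_dotProduct, Finset.mul_sum]
  exact Finset.sum_le_sum fun i _ =>
    mul_le_mul_of_nonneg_right (eigenvalues_le_eigk_zero hA i) (sq_nonneg _)

lemma add_dotProduct_mulVec_le_eigk_zero_add_eigk_one {d : ℕ} {A : Matrix (Fin d) (Fin d) ℝ}
    (hA : A.IsHermitian) {u v : Fin d → ℝ} (hu : u ⬝ᵥ u = 1) (hv : v ⬝ᵥ v = 1)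
    (huv : u ⬝ᵥ v = 0) : u ⬝ᵥ A *ᵥ u + v ⬝ᵥ A *ᵥ v ≤ eigk 0 A + eigk 1 A := by
  set e : Fin d → Fin d → ℝ := fun i => ⇑(hA.eigenvectorBasis i)
  set c : Fin d → ℝ := fun i => (e i ⬝ᵥ u) ^ 2 + (e i ⬝ᵥ v) ^ 2
  have hc : ∀ i, 0 ≤ c i := fun i => by positivity
  have hc₁ : ∀ i, c i ≤ 1 := fun i => by
    simpa only [c, dotProduct_comm _ u, dotProduct_comm _ v, e,
      hA.eigenvector_dotProduct_self] using sq_dotProduct_add_sq_dotProduct_le hu hv huv (e i)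
  have hsum : ∑ i, c i = 2 := by
    simp only [c, e, Finset.sum_add_distrib, hA.sum_sq_eigenvector_dotProduct, hu, hv]
    norm_num
  have hd : 1 < d := by
    have : (2 : ℝ) ≤ d := by
      simpa [← hsum] using Finset.sum_le_sum fun i (_ : i ∈ Finset.univ) => hc₁ i
    exact_mod_cast this
  obtain ⟨i₀, hi₀⟩ := exists_forall_ne_eigenvalues_le_eigk_one hA hd
  calc u ⬝ᵥ A *ᵥ u + v ⬝ᵥ A *ᵥ v = ∑ i, hA.eigenvalues i * c i := by
        simp only [hA.dotProduct_mulVec_self_eq_sum, c, e, mul_add, Finset.sum_add_distrib]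
    _ ≤ eigk 0 A + eigk 1 A :=
        sum_mul_le_add_of_sum_eq_two i₀ (eigenvalues_le_eigk_zero hA i₀) hi₀
          (eigk_one_le_eigk_zero hA hd) hc (hc₁ i₀) hsum

lemma dotProduct_mulVec_sub_vecMulVec_le {n : Type*} [Fintype n] {W : Matrix n n ℝ}
    (hW : W.IsHermitian) {v : n → ℝ} {t : ℝ} (hv : v ⬝ᵥ v = 1) (hWv : W *ᵥ v = t • v)
    (hgap : ∀ u, u ⬝ᵥ u = 1 → v ⬝ᵥ u = 0 → u ⬝ᵥ W *ᵥ u ≤ t - 1) (x : n → ℝ) :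
    x ⬝ᵥ (W - vecMulVec v v) *ᵥ x ≤ (t - 1) * (x ⬝ᵥ x) := by
  set c := v ⬝ᵥ x
  set u := x - c • v
  have hx : x = u + c • v := (sub_add_cancel x _).symm
  have hvu : v ⬝ᵥ u = 0 := by
    simp only [u, dotProduct_sub, dotProduct_smul, smul_eq_mul, hv, c]
    ring
  have hu : u ⬝ᵥ W *ᵥ u ≤ (t - 1) * (u ⬝ᵥ u) := dotProduct_mulVec_le_of_forall_smul
    fun a ha => hgap _ ha (by rw [dotProduct_smul, hvu, smul_zero])
  have hvWu : v ⬝ᵥ W *ᵥ u = 0 := by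
    rw [hW.dotProduct_mulVec_comm, hWv, dotProduct_smul, dotProduct_comm, hvu, smul_zero]
  have hxx : x ⬝ᵥ x = u ⬝ᵥ u + c ^ 2 := by
    rw [hx]
    simp only [dotProduct_add, add_dotProduct, dotProduct_smul, smul_dotProduct, smul_eq_mul,
      dotProduct_comm u v, hvu, hv]
    ring
  have hxWx : x ⬝ᵥ (W - vecMulVec v v) *ᵥ x = u ⬝ᵥ W *ᵥ u + (t - 1) * c ^ 2 := by
    rw [sub_mulVec, vecMulVec_self_mulVec, dotProduct_sub, dotProduct_smul, dotProduct_comm x v]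
    nth_rw 1 [hx, hx]
    simp only [mulVec_add, mulVec_smul, hWv, dotProduct_add, add_dotProduct, dotProduct_smul,
      smul_dotProduct, smul_eq_mul, dotProduct_comm u v, hvu, hvWu, hv]
    ring
  rw [hxWx, hxx]
  linarith

namespace Matrix

def frobeniusInner {n : Type*} [Fintype n] (A B : Matrix n n ℝ) : ℝ := ∑ i, ∑ j, A i j * B i j

variable {n : Type*} [Fintype n]

lemma frobeniusInner_comm (A B : Matrix n n ℝ) : frobeniusInner A B = frobeniusInner B A := by
  simp only [frobeniusInner, mul_comm]

lemma frobeniusInner_sub_left (A B C : Matrix n n ℝ) :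
    frobeniusInner (A - B) C = frobeniusInner A C - frobeniusInner B C := by
  simp only [frobeniusInner, Matrix.sub_apply, sub_mul, Finset.sum_sub_distrib]

lemma frobeniusInner_smul_left (c : ℝ) (A B : Matrix n n ℝ) :
    frobeniusInner (c • A) B = c * frobeniusInner A B := by
  simp only [frobeniusInner, Matrix.smul_apply, smul_eq_mul, mul_assoc, Finset.mul_sum]

lemma frobeniusInner_one_left [DecidableEq n] (A : Matrix n n ℝ) :
    frobeniusInner 1 A = A.trace := by
  simp [frobeniusInner, one_apply, trace]

lemma frobeniusInner_vecMulVec_left (a b : n → ℝ) (A : Matrix n n ℝ) :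
    frobeniusInner (vecMulVec a b) A = a ⬝ᵥ A *ᵥ b := by
  simp only [frobeniusInner, vecMulVec_apply, dotProduct, mulVec, Finset.mul_sum]
  exact Finset.sum_congr rfl fun i _ => Finset.sum_congr rfl fun j _ => by ring

lemma frobeniusInner_eq_trace_mul_transpose (A B : Matrix n n ℝ) :
    frobeniusInner A B = (A * Bᵀ).trace := by
  simp [frobeniusInner, trace, mul_apply]

open scoped MatrixOrder in
lemma PosSemidef.frobeniusInner_nonneg {A M : Matrix n n ℝ} (hA : A.PosSemidef)
    (hM : M.PosSemidef) : 0 ≤ frobeniusInner A M := by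
  classical
  obtain ⟨B, rfl⟩ := CStarAlgebra.nonneg_iff_eq_star_mul_self.mp hM.nonneg
  rw [frobeniusInner_eq_trace_mul_transpose, ← conjTranspose_eq_transpose_of_trivial,
    hM.1.eq, star_eq_conjTranspose, ← mul_assoc, trace_mul_cycle]
  exact (hA.mul_mul_conjTranspose_same B).trace_nonneg

lemma frobeniusInner_le_mul_trace {B M : Matrix n n ℝ} [DecidableEq n] (hB : B.IsHermitian)
    {s : ℝ} (hs : ∀ x, x ⬝ᵥ B *ᵥ x ≤ s * (x ⬝ᵥ x)) (hM : M.PosSemidef) :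
    frobeniusInner B M ≤ s * M.trace := by
  have hC : (s • 1 - B).PosSemidef := by
    refine .of_dotProduct_mulVec_nonneg ((isHermitian_one.smul (IsSelfAdjoint.all s)).sub hB)
      fun x => ?_
    rw [star_trivial, sub_mulVec, smul_mulVec, one_mulVec, dotProduct_sub, dotProduct_smul,
      smul_eq_mul]
    linarith [hs x]
  have := hC.frobeniusInner_nonneg hM
  rwa [frobeniusInner_sub_left, frobeniusInner_smul_left, frobeniusInner_one_left,
    sub_nonneg] at this

end Matrix

lemma frob_eq_sqrt_frobeniusInner {d : ℕ} (A : Matrix (Fin d) (Fin d) ℝ) :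
    frob A = √(frobeniusInner A A) := by
  simp only [frob, frobeniusInner, sq]

lemma isProjSpectrahedron_of_frobeniusInner_le {d : ℕ} {W P : Matrix (Fin d) (Fin d) ℝ}
    (hP : P ∈ Spectrahedron d)
    (h : ∀ M ∈ Spectrahedron d, frobeniusInner (W - P) M ≤ frobeniusInner (W - P) P) :
    IsProjSpectrahedron W P := by
  refine ⟨hP, fun M hM => ?_⟩
  rw [frob_eq_sqrt_frobeniusInner, frob_eq_sqrt_frobeniusInner]
  apply Real.sqrt_le_sqrt
  have hexpand : frobeniusInner (M - W) (M - W) =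
      frobeniusInner (M - P) (M - P) + 2 * (frobeniusInner (W - P) P - frobeniusInner (W - P) M)
        + frobeniusInner (P - W) (P - W) := by
    simp only [frobeniusInner, Matrix.sub_apply, Finset.mul_sum, ← Finset.sum_sub_distrib,
      ← Finset.sum_add_distrib]
    exact Finset.sum_congr rfl fun i _ => Finset.sum_congr rfl fun j _ => by ring
  have hsq : 0 ≤ frobeniusInner (M - P) (M - P) :=
    Finset.sum_nonneg fun i _ => Finset.sum_nonneg fun j _ => mul_self_nonneg _
  linarith [h M hM]

theorem isProjSpectrahedron_vecMulVec_of_forall_orthogonal {d : ℕ}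
    {W : Matrix (Fin d) (Fin d) ℝ} (hW : W.IsHermitian) {v : Fin d → ℝ} {t : ℝ}
    (hv : v ⬝ᵥ v = 1) (hWv : W *ᵥ v = t • v)
    (hgap : ∀ u, u ⬝ᵥ u = 1 → v ⬝ᵥ u = 0 → u ⬝ᵥ W *ᵥ u ≤ t - 1) :
    IsProjSpectrahedron W (vecMulVec v v) := by
  have hP : (vecMulVec v v).PosSemidef := by
    simpa only [star_trivial] using posSemidef_vecMulVec_self_star v
  refine isProjSpectrahedron_of_frobeniusInner_le ⟨hP, by rw [trace_vecMulVec, hv]⟩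
    fun M hM => ?_
  have hbound := frobeniusInner_le_mul_trace (hW.sub hP.1)
    (dotProduct_mulVec_sub_vecMulVec_le hW hv hWv hgap) hM.1
  have hP_pair : frobeniusInner (W - vecMulVec v v) (vecMulVec v v) = t - 1 := by
    rw [frobeniusInner_comm, frobeniusInner_vecMulVec_left, sub_mulVec, vecMulVec_self_mulVec,
      hWv, dotProduct_sub, dotProduct_smul, dotProduct_smul, hv, smul_eq_mul, smul_eq_mul]
    ring
  rw [hM.2, mul_one] at hbound
  linarith

theorem rank_one_projection_condition_general {d : ℕ} (w : Fin d → ℝ) (hw : vnorm w = 1)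
    (X : Matrix (Fin d) (Fin d) ℝ) (hX : X.PosSemidef)
    (η α : ℝ) (hη : 0 < η) (hηα : η * α < 1)
    (W : Matrix (Fin d) (Fin d) ℝ)
    (hW : W = (1 - η * α) • vecMulVec w w + η • X)
    (w' : Fin d → ℝ) (hw' : vnorm w' = 1)
    (hEig : W.mulVec w' = eigk 0 W • w')
    (hCond : w ⬝ᵥ X.mulVec w ≥ (eigk 0 X + eigk 1 X + α) / 2) :
    IsProjSpectrahedron W (vecMulVec w' w') := by
  have hw₁ := dotProduct_self_eq_one_of_vnorm_eq_one hw
  have hw'₁ := dotProduct_self_eq_one_of_vnorm_eq_one hw'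
  have hquad : ∀ x, x ⬝ᵥ W *ᵥ x = (1 - η * α) * (w ⬝ᵥ x) ^ 2 + η * (x ⬝ᵥ X *ᵥ x) := fun x => by
    rw [hW, add_mulVec, smul_mulVec, smul_mulVec, vecMulVec_self_mulVec, dotProduct_add,
      dotProduct_smul, dotProduct_smul, dotProduct_smul, dotProduct_comm x w, smul_eq_mul,
      smul_eq_mul, smul_eq_mul]
    ring
  have hWh : W.IsHermitian := hW ▸ ((posSemidef_vecMulVec_self_star w).1.smul
    (IsSelfAdjoint.all _)).add (hX.1.smul (IsSelfAdjoint.all η))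
  refine isProjSpectrahedron_vecMulVec_of_forall_orthogonal hWh hw'₁ hEig fun u hu hw'u => ?_
  have huw' : u ⬝ᵥ w' = 0 := dotProduct_comm u w' ▸ hw'u
  have hRayleigh := dotProduct_mulVec_self_le_eigk_zero hWh w
  have hKyFan := add_dotProduct_mulVec_le_eigk_zero_add_eigk_one hX.1 hu hw'₁ huw'
  have hBessel := sq_dotProduct_add_sq_dotProduct_le hu hw'₁ huw' w
  have htop : w' ⬝ᵥ W *ᵥ w' = eigk 0 W := by
    rw [hEig, dotProduct_smul, hw'₁, smul_eq_mul, mul_one]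
  rw [hquad, hw₁] at hRayleigh
  rw [hquad] at htop ⊢
  rw [dotProduct_comm u w, dotProduct_comm w' w, hw₁] at hBessel
  linarith [mul_le_mul_of_nonneg_left hBessel (by linarith : (0 : ℝ) ≤ 1 - η * α),
    mul_le_mul_of_nonneg_left hKyFan hη.le, mul_le_mul_of_nonneg_left hCond hη.le]

/-- **Lemma 3 (rank-one projection condition).** -/
theorem rank_one_projection_condition {d : ℕ} (w : Fin d → ℝ) (hw : vnorm w = 1)
    (X : Matrix (Fin d) (Fin d) ℝ) (hX : X.PosSemidef)
    (η α : ℝ) (hη : 0 < η) (hα : 0 ≤ α) (hηα : η * α < 1)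
    (W : Matrix (Fin d) (Fin d) ℝ)
    (hW : W = (1 - η * α) • vecMulVec w w + η • X)
    (w' : Fin d → ℝ) (hw' : vnorm w' = 1)
    (hEig : W.mulVec w' = eigk 0 W • w')
    (hCond : w ⬝ᵥ X.mulVec w ≥ (eigk 0 X + eigk 1 X + α) / 2) :
    IsProjSpectrahedron W (vecMulVec w' w') :=
  rank_one_projection_condition_general w hw X hX η α hη hηα W hW w' hw' hEig hCond
end

section
/- (Rank-one projection via eigenvalue gap; sub-claim in the proof of Lemma 3.) Let W ∈ R^{d×d} be a symmetric matrix with λ1(W) ≥ 1 + λ2(W), and let w' be a unit leading eigenvector of W. Then Π_S[W] = w' w'^⊤, i.e., the Euclidean projection of W onto the spectrahedron equals the rank-one matrix w' w'^⊤. -/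
open Matrix MeasureTheory ProbabilityTheory BigOperators

/-! With `⟨A, B⟩ = tr (Aᵀ B)`, the matrix `P = w' w'ᵀ` has `‖P‖² = 1` and `⟨P, W⟩ = λ₁`, so it
suffices to show `‖M‖² - 2 ⟨M, W⟩ ≥ 1 - 2 λ₁` for every `M` in the spectrahedron. The diagonal
`p` of `M` in an orthonormal eigenbasis of `W` is a probability vector with `⟨M, W⟩ = ∑ λᵢ pᵢ`
and `∑ pᵢ² ≤ ‖M‖²`. Every eigenvalue other than `λ₁` is at most `λ₁ - 1`, so
`∑ λᵢ pᵢ ≤ λ₁ - 1 + p₁`, and then `∑ pᵢ² - 2 ∑ λᵢ pᵢ ≥ p₁² - 2 p₁ + 2 - 2 λ₁ ≥ 1 - 2 λ₁`. -/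

open Finset

lemma one_sub_two_mul_le_sum_sq_sub_two_mul_sum_mul {ι : Type*} [Fintype ι]
    {p lam : ι → ℝ} {l : ℝ} {i₀ : ι} (hp : p ∈ stdSimplex ℝ ι) (h₀ : lam i₀ ≤ l)
    (hgap : ∀ i ≠ i₀, lam i ≤ l - 1) :
    1 - 2 * l ≤ ∑ i, p i ^ 2 - 2 * ∑ i, lam i * p i := by
  classical
  have hlin : ∑ i, lam i * p i ≤ l - 1 + p i₀ :=
    calc ∑ i, lam i * p i ≤ ∑ i, (l - 1 + if i = i₀ then 1 else 0) * p i := by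
          refine sum_le_sum fun i _ => mul_le_mul_of_nonneg_right ?_ (hp.1 i)
          split_ifs with hi
          · linarith [hi ▸ h₀]
          · linarith [hgap i hi]
      _ = l - 1 + p i₀ := by simp [add_mul, sum_add_distrib, ← mul_sum, hp.2]
  have hsq : p i₀ ^ 2 ≤ ∑ i, p i ^ 2 :=
    single_le_sum (f := fun i => p i ^ 2) (fun i _ => sq_nonneg _) (mem_univ i₀)
  nlinarith [sq_nonneg (p i₀ - 1)]

lemma exists_eigenvalues_eq_eigk_zero {d : ℕ} {A : Matrix (Fin d) (Fin d) ℝ}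
    (hA : A.IsHermitian) (hd : 0 < d) :
    ∃ i₀, hA.eigenvalues i₀ = eigk 0 A ∧ ∀ i ≠ i₀, hA.eigenvalues i ≤ eigk 1 A := by
  set σ := Tuple.sort hA.eigenvalues
  refine ⟨σ (Fin.rev ⟨0, hd⟩), by rw [eigk, dif_pos hd, dif_pos hA]; rfl, fun i hi => ?_⟩
  have hlt : (σ.symm i : ℕ) < d - 1 := by
    have hne : σ.symm i ≠ Fin.rev ⟨0, hd⟩ := fun h => hi (by rw [← h, Equiv.apply_symm_apply])
    have := (σ.symm i).isLt
    simp only [Ne, Fin.ext_iff, Fin.val_rev] at hne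
    omega
  have h1d : 1 < d := by omega
  have hle : σ.symm i ≤ Fin.rev ⟨1, h1d⟩ := by simp only [Fin.le_def, Fin.val_rev]; omega
  rw [eigk, dif_pos h1d, dif_pos hA]
  simpa [σ] using Tuple.monotone_sort hA.eigenvalues hle

section TraceForm

variable {n : Type*} [Fintype n]

lemma sum_sum_sq_eq_trace_transpose_mul_self (A : Matrix n n ℝ) :
    ∑ i, ∑ j, A i j ^ 2 = (Aᵀ * A).trace := by
  simp only [trace, diag_apply, mul_apply, transpose_apply, sq]
  exact sum_comm

lemma sum_diag_sq_le_trace_transpose_mul_self (A : Matrix n n ℝ) :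
    ∑ i, A i i ^ 2 ≤ (Aᵀ * A).trace := by
  rw [← sum_sum_sq_eq_trace_transpose_mul_self]
  exact sum_le_sum fun i _ =>
    single_le_sum (f := fun j => A i j ^ 2) (fun j _ => sq_nonneg _) (mem_univ i)

lemma trace_transpose_sub_mul_sub (A W : Matrix n n ℝ) :
    ((A - W)ᵀ * (A - W)).trace = (Aᵀ * A).trace - 2 * (Aᵀ * W).trace + (Wᵀ * W).trace := by
  have hsymm : (Wᵀ * A).trace = (Aᵀ * W).trace := by
    rw [← trace_transpose, transpose_mul, transpose_transpose]
  simp only [transpose_sub, sub_mul, mul_sub, trace_sub, hsymm]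
  ring

lemma trace_vecMulVec_transpose_mul (v : n → ℝ) (A : Matrix n n ℝ) :
    ((vecMulVec v v)ᵀ * A).trace = v ⬝ᵥ A *ᵥ v := by
  rw [transpose_vecMulVec, vecMulVec_mul, trace_vecMulVec, dotProduct_mulVec, dotProduct_comm]

end TraceForm

lemma frob_nonneg {d : ℕ} (A : Matrix (Fin d) (Fin d) ℝ) : 0 ≤ frob A := Real.sqrt_nonneg _

lemma frob_sq {d : ℕ} (A : Matrix (Fin d) (Fin d) ℝ) : frob A ^ 2 = (Aᵀ * A).trace := by
  rw [frob, Real.sq_sqrt (by positivity), sum_sum_sq_eq_trace_transpose_mul_self]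

lemma frob_sub_le_frob_sub_iff {d : ℕ} (A B W : Matrix (Fin d) (Fin d) ℝ) :
    frob (A - W) ≤ frob (B - W) ↔
      (Aᵀ * A).trace - 2 * (Aᵀ * W).trace ≤ (Bᵀ * B).trace - 2 * (Bᵀ * W).trace := by
  rw [← sq_le_sq₀ (frob_nonneg _) (frob_nonneg _), frob_sq, frob_sq,
    trace_transpose_sub_mul_sub, trace_transpose_sub_mul_sub, add_le_add_iff_right]

lemma vecMulVec_self_mem_spectrahedron {d : ℕ} {v : Fin d → ℝ} (hv : v ⬝ᵥ v = 1) :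
    vecMulVec v v ∈ Spectrahedron d :=
  ⟨by simpa using posSemidef_vecMulVec_self_star v, by rw [trace_vecMulVec, hv]⟩

lemma Matrix.IsHermitian.exists_mem_stdSimplex_trace_mul_eq {n : Type*} [Fintype n]
    [DecidableEq n] {W M : Matrix n n ℝ} (hW : W.IsHermitian) (hM : M.PosSemidef)
    (htr : M.trace = 1) :
    ∃ p ∈ stdSimplex ℝ n, (M * W).trace = ∑ i, hW.eigenvalues i * p i ∧
      ∑ i, p i ^ 2 ≤ (M * M).trace := by
  set U : Matrix n n ℝ := ↑hW.eigenvectorUnitary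
  have hUU : U * star U = 1 := Unitary.mul_star_self_of_mem hW.eigenvectorUnitary.2
  set N := star U * M * U
  have hN : N.PosSemidef := hM.conjTranspose_mul_mul_same U
  -- `p` is the diagonal of `M` in an orthonormal eigenbasis of `W`.
  refine ⟨fun i => N i i, ⟨fun i => hN.diag_nonneg, ?_⟩, ?_, ?_⟩
  · change N.trace = 1
    rw [trace_mul_cycle, hUU, one_mul, htr]
  · conv_lhs => rw [hW.spectral_theorem]
    rw [Unitary.conjStarAlgAut_apply, ← mul_assoc, ← mul_assoc, trace_mul_cycle, ← mul_assoc]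
    simp [trace, mul_diagonal, N, U, mul_comm]
  · calc ∑ i, N i i ^ 2 ≤ (Nᵀ * N).trace := sum_diag_sq_le_trace_transpose_mul_self N
      _ = (M * M).trace := by
        rw [(isHermitian_iff_isSymm.mp hN.isHermitian).eq,
          show N * N = star U * M * (U * star U) * M * U by simp only [N, mul_assoc], hUU, mul_one,
          mul_assoc (star U), trace_mul_cycle, hUU, one_mul]

/-- **Rank-one projection via eigenvalue gap** (sub-claim in the proof of Lemma 3). -/
theorem rank_one_projection_of_eigenvalue_gap {d : ℕ}
    (W : Matrix (Fin d) (Fin d) ℝ) (hWsymm : W.IsSymm)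
    (hGap : eigk 0 W ≥ 1 + eigk 1 W)
    (w' : Fin d → ℝ) (hw' : vnorm w' = 1)
    (hEig : W.mulVec w' = eigk 0 W • w') :
    IsProjSpectrahedron W (vecMulVec w' w') := by
  have hW : W.IsHermitian := isHermitian_iff_isSymm.mpr hWsymm
  have hunit : w' ⬝ᵥ w' = 1 := Real.sqrt_eq_one.mp hw'
  have hd : 0 < d := Nat.pos_of_ne_zero fun h => by subst h; simp at hunit
  obtain ⟨i₀, hi₀, hgap⟩ := exists_eigenvalues_eq_eigk_zero hW hd
  refine ⟨vecMulVec_self_mem_spectrahedron hunit, fun M ⟨hM, htr⟩ => ?_⟩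
  obtain ⟨p, hp, hMW, hMM⟩ := hW.exists_mem_stdSimplex_trace_mul_eq hM htr
  have hscalar := one_sub_two_mul_le_sum_sq_sub_two_mul_sum_mul hp hi₀.le
    fun i hi => by linarith [hgap i hi]
  have hPP : ((vecMulVec w' w')ᵀ * vecMulVec w' w').trace = 1 := by
    rw [trace_vecMulVec_transpose_mul, vecMulVec_mulVec, hunit]
    simp [hunit]
  have hPW : ((vecMulVec w' w')ᵀ * W).trace = eigk 0 W := by
    rw [trace_vecMulVec_transpose_mul, hEig, dotProduct_smul, hunit, smul_eq_mul, mul_one]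
  rw [frob_sub_le_frob_sub_iff, hPP, hPW, (isHermitian_iff_isSymm.mp hM.isHermitian).eq]
  linarith
end

section
/- (Lemma 5, correlation increase, deterministic form.) Let Q ∈ R^{d×d} be symmetric positive semidefinite with unit leading eigenvector x and eigengap δ(Q) := λ1(Q) − λ2(Q). Let V_mat = Σ_{i=1}^ℓ v_i v_i^⊤ where ‖v_i‖ ≤ V for all i, let D ∈ R^{d×d} be symmetric, and set X := ℓ·Q + V_mat + D. Let ŵ be a unit vector with (x^⊤ ŵ)^2 ≥ 1/2, let η > 0 and α ≥ 0 with ηα < 1, set W := (1 − ηα) ŵ ŵ^⊤ + η X, suppose λ1(W) > λ2(W), and let w' be a unit leading eigenvector of W. Then (x^⊤ w')^2 ≥ (x^⊤ ŵ)^2 + ηℓ · [(1 − (x^⊤ ŵ)^2)·δ(Q) − (x^⊤ ŵ)^2 · V^2 − 4ℓ^{-1}‖D‖] / (λ1(W) − λ2(W)). -/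
open Matrix MeasureTheory ProbabilityTheory BigOperators

/-!
Let `λ₁ > λ₂` be the top two eigenvalues of `W`, `w'` and `u` orthonormal eigenvectors for them,
`b = (xᵀŵ)²` and `γ = (xᵀw')²`. Expanding `x` in a sorted eigenbasis of `W` gives
`xᵀWx ≤ λ₁γ + λ₂(1 - γ)`, while `xᵀWx ≥ (1 - ηα)b + ηℓλ₁(Q) - η‖D‖` because `Σ vᵢvᵢᵀ ⪰ 0`.
Evaluating the quadratic form of `W` at `w'` and at `u` and applying Ky Fan's inequality to `Q`
and Bessel's inequality to `ŵ` and the `vᵢ` bounds `λ₁` and `λ₁ + λ₂` from above. Comparing the combination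
`(2b - 1)λ₁ + (1 - b)(λ₁ + λ₂) = bλ₁ + (1 - b)λ₂` of these bounds with the two estimates of `xᵀWx`
gives the claim.
-/

section DotProduct

variable {ι : Type*} [Fintype ι]

lemma sq_dotProduct_le (a b : ι → ℝ) : (a ⬝ᵥ b) ^ 2 ≤ (a ⬝ᵥ a) * (b ⬝ᵥ b) := by
  simpa only [dotProduct, sq] using Finset.sum_mul_sq_le_sq_mul_sq Finset.univ a b

lemma sq_dotProduct_add_sq_dotProduct_le_s6 {a b : ι → ℝ} (ha : a ⬝ᵥ a = 1) (hb : b ⬝ᵥ b = 1)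
    (hab : a ⬝ᵥ b = 0) (z : ι → ℝ) : (a ⬝ᵥ z) ^ 2 + (b ⬝ᵥ z) ^ 2 ≤ z ⬝ᵥ z := by
  have h := dotProduct_star_self_nonneg (z - (a ⬝ᵥ z) • a - (b ⬝ᵥ z) • b)
  simp only [star_trivial, sub_dotProduct, dotProduct_sub, smul_dotProduct, dotProduct_smul,
    smul_eq_mul, dotProduct_comm z a, dotProduct_comm z b, dotProduct_comm b a, ha, hb,
    hab] at h
  linarith

lemma dotProduct_eq_inner_toLp (a b : ι → ℝ) :
    a ⬝ᵥ b = inner ℝ (WithLp.toLp 2 a : EuclideanSpace ℝ ι) (WithLp.toLp 2 b) := by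
  simp [EuclideanSpace.inner_eq_star_dotProduct, dotProduct_comm]

lemma Matrix.IsHermitian.dotProduct_mulVec_comm_s6 {A : Matrix ι ι ℝ} (hA : A.IsHermitian)
    (a b : ι → ℝ) : a ⬝ᵥ (A *ᵥ b) = b ⬝ᵥ (A *ᵥ a) := by
  rw [← dotProduct_transpose_mulVec, (isHermitian_iff_isSymm.1 hA).eq]

lemma Matrix.IsHermitian.dotProduct_eq_zero_of_mulVec_eq_smul {A : Matrix ι ι ℝ}
    (hA : A.IsHermitian) {a b : ι → ℝ} {s t : ℝ} (ha : A *ᵥ a = s • a) (hb : A *ᵥ b = t • b)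
    (hst : s ≠ t) : a ⬝ᵥ b = 0 := by
  have h : s * (a ⬝ᵥ b) = t * (a ⬝ᵥ b) := by
    calc s * (a ⬝ᵥ b) = b ⬝ᵥ (A *ᵥ a) := by rw [ha, dotProduct_smul, smul_eq_mul, dotProduct_comm]
      _ = a ⬝ᵥ (A *ᵥ b) := (hA.dotProduct_mulVec_comm_s6 a b).symm
      _ = t * (a ⬝ᵥ b) := by rw [hb, dotProduct_smul, smul_eq_mul]
  exact (mul_eq_mul_right_iff.1 h).resolve_left hst

end DotProduct

section Norms

variable {n : ℕ}

lemma vnorm_eq_one_iff {a : Fin n → ℝ} : vnorm a = 1 ↔ a ⬝ᵥ a = 1 := Real.sqrt_eq_one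

lemma dotProduct_self_le_sq_of_vnorm_le {a : Fin n → ℝ} {V : ℝ} (h : vnorm a ≤ V) :
    a ⬝ᵥ a ≤ V ^ 2 := by
  have h0 : 0 ≤ a ⬝ᵥ a := Finset.sum_nonneg fun i _ => mul_self_nonneg (a i)
  rw [← Real.sq_sqrt h0]
  exact pow_le_pow_left₀ (Real.sqrt_nonneg _) h 2

lemma vnorm_mulVec_le_frob (A : Matrix (Fin n) (Fin n) ℝ) {a : Fin n → ℝ} (ha : a ⬝ᵥ a = 1) :
    vnorm (A *ᵥ a) ≤ frob A := by
  refine Real.sqrt_le_sqrt (Finset.sum_le_sum fun i _ => ?_)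
  have h := sq_dotProduct_le (A i) a
  rw [ha, mul_one] at h
  simpa only [mulVec, dotProduct, sq] using h

lemma abs_dotProduct_mulVec_le_spec (A : Matrix (Fin n) (Fin n) ℝ) {a : Fin n → ℝ}
    (ha : a ⬝ᵥ a = 1) : |a ⬝ᵥ (A *ᵥ a)| ≤ spec A := by
  have hbdd : BddAbove {r : ℝ | ∃ v : Fin n → ℝ, vnorm v = 1 ∧ r = vnorm (A *ᵥ v)} :=
    ⟨frob A, fun r ⟨v, hv, hr⟩ => hr ▸ vnorm_mulVec_le_frob A (vnorm_eq_one_iff.1 hv)⟩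
  refine le_trans ?_ (le_csSup hbdd ⟨a, vnorm_eq_one_iff.2 ha, rfl⟩)
  have h := sq_dotProduct_le a (A *ᵥ a)
  rw [ha, one_mul] at h
  exact Real.abs_le_sqrt h

end Norms

/-- An orthonormal eigenbasis of `A` (unit vectors satisfying Parseval's identity), sorted by
decreasing eigenvalue. -/
structure SortedEigenbasis {n : ℕ} (A : Matrix (Fin n) (Fin n) ℝ) where
  vec : Fin n → Fin n → ℝ
  val : Fin n → ℝ
  antitone_val : Antitone val
  eigk_eq : ∀ i : Fin n, eigk i A = val i
  mulVec_vec : ∀ i, A *ᵥ vec i = val i • vec i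
  vec_dotProduct_self : ∀ i, vec i ⬝ᵥ vec i = 1
  dotProduct_eq_sum : ∀ a b, a ⬝ᵥ b = ∑ i, (vec i ⬝ᵥ a) * (vec i ⬝ᵥ b)

noncomputable def Matrix.IsHermitian.sortedEigenbasis {n : ℕ} {A : Matrix (Fin n) (Fin n) ℝ}
    (hA : A.IsHermitian) : SortedEigenbasis A where
  vec i := (hA.eigenvectorBasis (Tuple.sort hA.eigenvalues i.rev)).ofLp
  val i := hA.eigenvalues (Tuple.sort hA.eigenvalues i.rev)
  antitone_val _ _ hij := Tuple.monotone_sort hA.eigenvalues (Fin.rev_le_rev.2 hij)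
  eigk_eq i := by simp only [eigk, dif_pos i.isLt, dif_pos hA]; rfl
  mulVec_vec i := hA.mulVec_eigenvectorBasis _
  vec_dotProduct_self i := by
    rw [dotProduct_eq_inner_toLp, WithLp.toLp_ofLp, real_inner_self_eq_norm_sq,
      hA.eigenvectorBasis.orthonormal.1, one_pow]
  dotProduct_eq_sum a b := by
    rw [dotProduct_eq_inner_toLp, ← hA.eigenvectorBasis.sum_inner_mul_inner,
      ← (Fin.revPerm.trans (Tuple.sort hA.eigenvalues)).sum_comp]
    simp [dotProduct_eq_inner_toLp, real_inner_comm]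

namespace SortedEigenbasis

lemma eigk_zero {n : ℕ} {A : Matrix (Fin (n + 1)) (Fin (n + 1)) ℝ} (E : SortedEigenbasis A) :
    eigk 0 A = E.val 0 :=
  E.eigk_eq 0

lemma eigk_one {n : ℕ} {A : Matrix (Fin (n + 2)) (Fin (n + 2)) ℝ} (E : SortedEigenbasis A) :
    eigk 1 A = E.val 1 :=
  E.eigk_eq 1

variable {n : ℕ} {A : Matrix (Fin n) (Fin n) ℝ} (E : SortedEigenbasis A)

lemma sum_sq_dotProduct (a : Fin n → ℝ) : ∑ i, (E.vec i ⬝ᵥ a) ^ 2 = a ⬝ᵥ a := by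
  simp only [E.dotProduct_eq_sum a a, sq]

lemma dotProduct_mulVec_self (hA : A.IsHermitian) (a : Fin n → ℝ) :
    a ⬝ᵥ (A *ᵥ a) = ∑ i, E.val i * (E.vec i ⬝ᵥ a) ^ 2 := by
  rw [E.dotProduct_eq_sum]
  refine Finset.sum_congr rfl fun i _ => ?_
  rw [hA.dotProduct_mulVec_comm_s6, E.mulVec_vec, dotProduct_smul, smul_eq_mul,
    dotProduct_comm a]
  ring

end SortedEigenbasis

lemma sum_mul_le_of_antitone {n : ℕ} {μ c : Fin (n + 2) → ℝ} (hμ : Antitone μ)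
    (hc : ∀ i, 0 ≤ c i) : ∑ i, μ i * c i ≤ μ 0 * c 0 + μ 1 * (∑ i, c i - c 0) := by
  rw [Fin.sum_univ_succ, Fin.sum_univ_succ c, add_sub_cancel_left, Finset.mul_sum]
  refine add_le_add le_rfl (Finset.sum_le_sum fun i _ => ?_)
  exact mul_le_mul_of_nonneg_right (hμ (Fin.le_def.2 (by simp))) (hc _)

section Eigenvalues

variable {n : ℕ}

lemma dotProduct_mulVec_le_eigk_zero {A : Matrix (Fin (n + 1)) (Fin (n + 1)) ℝ}
    (hA : A.IsHermitian) {a : Fin (n + 1) → ℝ} (ha : a ⬝ᵥ a = 1) :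
    a ⬝ᵥ (A *ᵥ a) ≤ eigk 0 A := by
  let E := hA.sortedEigenbasis
  calc a ⬝ᵥ (A *ᵥ a) = ∑ i, E.val i * (E.vec i ⬝ᵥ a) ^ 2 := E.dotProduct_mulVec_self hA a
    _ ≤ ∑ i, E.val 0 * (E.vec i ⬝ᵥ a) ^ 2 := by
      gcongr with i
      exact E.antitone_val (Fin.zero_le i)
    _ = eigk 0 A := by rw [← Finset.mul_sum, E.sum_sq_dotProduct, ha, mul_one, E.eigk_zero]

variable {A : Matrix (Fin (n + 2)) (Fin (n + 2)) ℝ}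

lemma add_dotProduct_mulVec_le_eigk_zero_add_eigk_one_s6 (hA : A.IsHermitian)
    {a b : Fin (n + 2) → ℝ} (ha : a ⬝ᵥ a = 1) (hb : b ⬝ᵥ b = 1) (hab : a ⬝ᵥ b = 0) :
    a ⬝ᵥ (A *ᵥ a) + b ⬝ᵥ (A *ᵥ b) ≤ eigk 0 A + eigk 1 A := by
  let E := hA.sortedEigenbasis
  set c : Fin (n + 2) → ℝ := fun i => (E.vec i ⬝ᵥ a) ^ 2 + (E.vec i ⬝ᵥ b) ^ 2
  have hc1 : c 0 ≤ 1 := by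
    simpa only [c, dotProduct_comm (E.vec 0), E.vec_dotProduct_self] using
      sq_dotProduct_add_sq_dotProduct_le_s6 ha hb hab (E.vec 0)
  have hsum : ∑ i, c i = 2 := by
    simp only [c, Finset.sum_add_distrib, E.sum_sq_dotProduct, ha, hb]
    norm_num
  have h := sum_mul_le_of_antitone E.antitone_val (c := c) fun i => by positivity
  have h01 : E.val 1 ≤ E.val 0 := E.antitone_val zero_le_one
  rw [E.dotProduct_mulVec_self hA a, E.dotProduct_mulVec_self hA b, ← Finset.sum_add_distrib,
    E.eigk_zero, E.eigk_one]
  simp only [← mul_add]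
  change ∑ i, E.val i * c i ≤ _
  rw [hsum] at h
  linarith [mul_nonneg (sub_nonneg.2 h01) (sub_nonneg.2 hc1)]

lemma dotProduct_mulVec_le_of_mulVec_eq_eigk_zero (hA : A.IsHermitian)
    (hgap : eigk 1 A < eigk 0 A) {w : Fin (n + 2) → ℝ} (hw : w ⬝ᵥ w = 1)
    (hAw : A *ᵥ w = eigk 0 A • w) {x : Fin (n + 2) → ℝ} (hx : x ⬝ᵥ x = 1) :
    x ⬝ᵥ (A *ᵥ x) ≤ eigk 0 A * (x ⬝ᵥ w) ^ 2 + eigk 1 A * (1 - (x ⬝ᵥ w) ^ 2) := by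
  let E := hA.sortedEigenbasis
  have hperp : ∀ i : Fin (n + 1), E.vec i.succ ⬝ᵥ w = 0 := fun i =>
    hA.dotProduct_eq_zero_of_mulVec_eq_smul (E.mulVec_vec _) hAw <| ne_of_lt <|
      calc E.val i.succ ≤ E.val 1 := E.antitone_val (Fin.le_def.2 (by simp))
        _ < eigk 0 A := E.eigk_one ▸ hgap
  have hexpand : ∀ a, a ⬝ᵥ w = (E.vec 0 ⬝ᵥ a) * (E.vec 0 ⬝ᵥ w) := fun a => by
    simp [E.dotProduct_eq_sum a w, Fin.sum_univ_succ, hperp]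
  have hxw : (x ⬝ᵥ w) ^ 2 = (E.vec 0 ⬝ᵥ x) ^ 2 := by
    have h := hexpand w
    rw [hw] at h
    rw [hexpand x, mul_pow, sq (E.vec 0 ⬝ᵥ w), ← h, mul_one]
  have h := sum_mul_le_of_antitone E.antitone_val (c := fun i => (E.vec i ⬝ᵥ x) ^ 2)
    fun i => sq_nonneg _
  rw [E.sum_sq_dotProduct, hx] at h
  rw [E.dotProduct_mulVec_self hA, hxw, E.eigk_zero, E.eigk_one]
  exact h

lemma exists_dotProduct_mulVec_eq_eigk_one (hA : A.IsHermitian)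
    (hgap : eigk 1 A < eigk 0 A) {w : Fin (n + 2) → ℝ} (hAw : A *ᵥ w = eigk 0 A • w) :
    ∃ u, u ⬝ᵥ u = 1 ∧ w ⬝ᵥ u = 0 ∧ u ⬝ᵥ (A *ᵥ u) = eigk 1 A := by
  let E := hA.sortedEigenbasis
  refine ⟨E.vec 1, E.vec_dotProduct_self 1,
    hA.dotProduct_eq_zero_of_mulVec_eq_smul hAw (E.mulVec_vec 1) (E.eigk_one ▸ hgap.ne'), ?_⟩
  rw [E.mulVec_vec, dotProduct_smul, E.vec_dotProduct_self, smul_eq_mul, mul_one, E.eigk_one]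

end Eigenvalues

def updateMatrix {n ℓ : ℕ} (Q D : Matrix (Fin n) (Fin n) ℝ) (v : Fin ℓ → Fin n → ℝ)
    (wh : Fin n → ℝ) (c η : ℝ) : Matrix (Fin n) (Fin n) ℝ :=
  c • vecMulVec wh wh + η • ((ℓ : ℝ) • Q + ∑ i, vecMulVec (v i) (v i) + D)

section UpdateMatrix

variable {n ℓ : ℕ} {v : Fin ℓ → Fin n → ℝ} {V : ℝ}

lemma sum_sq_dotProduct_le (hv : ∀ i, vnorm (v i) ≤ V) {a : Fin n → ℝ} (ha : a ⬝ᵥ a = 1) :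
    ∑ i, (v i ⬝ᵥ a) ^ 2 ≤ ℓ * V ^ 2 := by
  simpa using Finset.sum_le_card_nsmul Finset.univ _ (V ^ 2) fun i _ =>
    calc (v i ⬝ᵥ a) ^ 2 ≤ (v i ⬝ᵥ v i) * (a ⬝ᵥ a) := sq_dotProduct_le _ _
      _ ≤ V ^ 2 := by rw [ha, mul_one]; exact dotProduct_self_le_sq_of_vnorm_le (hv i)

lemma sum_sq_dotProduct_add_sq_dotProduct_le (hv : ∀ i, vnorm (v i) ≤ V)
    {a b : Fin n → ℝ} (ha : a ⬝ᵥ a = 1) (hb : b ⬝ᵥ b = 1) (hab : a ⬝ᵥ b = 0) :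
    ∑ i, (v i ⬝ᵥ a) ^ 2 + ∑ i, (v i ⬝ᵥ b) ^ 2 ≤ ℓ * V ^ 2 := by
  have h : ∀ i, (v i ⬝ᵥ a) ^ 2 + (v i ⬝ᵥ b) ^ 2 ≤ V ^ 2 := fun i => by
    simpa only [dotProduct_comm (v i)] using (sq_dotProduct_add_sq_dotProduct_le_s6 ha hb hab
      (v i)).trans (dotProduct_self_le_sq_of_vnorm_le (hv i))
  rw [← Finset.sum_add_distrib]
  simpa using Finset.sum_le_card_nsmul Finset.univ _ _ fun i _ => h i

variable {Q D : Matrix (Fin n) (Fin n) ℝ} {wh : Fin n → ℝ} {c η : ℝ}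

lemma isHermitian_updateMatrix (hQ : Q.IsHermitian) (hD : D.IsHermitian) :
    (updateMatrix Q D v wh c η).IsHermitian := by
  have hvv : ∀ u : Fin n → ℝ, (vecMulVec u u).IsHermitian := fun u => by
    simpa using (posSemidef_vecMulVec_self_star u).isHermitian
  have hsum : (∑ i, vecMulVec (v i) (v i)).IsHermitian :=
    isSelfAdjoint_sum _ fun i _ => hvv (v i)
  exact ((hvv wh).smul (.all c)).add ((((hQ.smul (.all _)).add hsum).add hD).smul (.all η))

lemma dotProduct_mulVec_updateMatrix (a : Fin n → ℝ) :
    a ⬝ᵥ (updateMatrix Q D v wh c η *ᵥ a) =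
      c * (wh ⬝ᵥ a) ^ 2 + η * (ℓ * (a ⬝ᵥ (Q *ᵥ a)) + ∑ i, (v i ⬝ᵥ a) ^ 2 + a ⬝ᵥ (D *ᵥ a)) := by
  simp only [updateMatrix, add_mulVec, smul_mulVec, sum_mulVec, vecMulVec_mulVec, dotProduct_add,
    dotProduct_smul, dotProduct_sum, op_smul_eq_smul, smul_eq_mul, dotProduct_comm a wh,
    dotProduct_comm a (v _), ← sq]

lemma le_dotProduct_mulVec_updateMatrix (hη : 0 ≤ η) {x : Fin n → ℝ} (hx : x ⬝ᵥ x = 1) {q : ℝ}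
    (hQx : Q *ᵥ x = q • x) :
    c * (wh ⬝ᵥ x) ^ 2 + η * (ℓ * q - spec D) ≤ x ⬝ᵥ (updateMatrix Q D v wh c η *ᵥ x) := by
  have hxQx : x ⬝ᵥ (Q *ᵥ x) = q := by rw [hQx, dotProduct_smul, hx, smul_eq_mul, mul_one]
  have hD := (abs_le.1 (abs_dotProduct_mulVec_le_spec D hx)).1
  have hV : 0 ≤ ∑ i, (v i ⬝ᵥ x) ^ 2 := Finset.sum_nonneg fun i _ => sq_nonneg _
  rw [dotProduct_mulVec_updateMatrix, hxQx]
  linarith [mul_le_mul_of_nonneg_left hD hη, mul_nonneg hη hV]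

end UpdateMatrix

section UpdateMatrixUpperBounds

variable {n ℓ : ℕ} {V c η : ℝ}

lemma dotProduct_mulVec_updateMatrix_le {Q D : Matrix (Fin (n + 1)) (Fin (n + 1)) ℝ}
    {v : Fin ℓ → Fin (n + 1) → ℝ} {wh : Fin (n + 1) → ℝ}
    (hQ : Q.IsHermitian) (hc : 0 ≤ c) (hη : 0 ≤ η) (hwh : wh ⬝ᵥ wh = 1)
    (hv : ∀ i, vnorm (v i) ≤ V) {a : Fin (n + 1) → ℝ} (ha : a ⬝ᵥ a = 1) :
    a ⬝ᵥ (updateMatrix Q D v wh c η *ᵥ a) ≤ c + η * (ℓ * eigk 0 Q + ℓ * V ^ 2 + spec D) := by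
  have hwha : (wh ⬝ᵥ a) ^ 2 ≤ 1 := by simpa [hwh, ha] using sq_dotProduct_le wh a
  have hX : ℓ * (a ⬝ᵥ (Q *ᵥ a)) + ∑ i, (v i ⬝ᵥ a) ^ 2 + a ⬝ᵥ (D *ᵥ a)
      ≤ ℓ * eigk 0 Q + ℓ * V ^ 2 + spec D := by
    gcongr
    · exact dotProduct_mulVec_le_eigk_zero hQ ha
    · exact sum_sq_dotProduct_le hv ha
    · exact (abs_le.1 (abs_dotProduct_mulVec_le_spec D ha)).2
  rw [dotProduct_mulVec_updateMatrix]
  linarith [mul_le_mul_of_nonneg_left hwha hc, mul_le_mul_of_nonneg_left hX hη]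

lemma add_dotProduct_mulVec_updateMatrix_le {Q D : Matrix (Fin (n + 2)) (Fin (n + 2)) ℝ}
    {v : Fin ℓ → Fin (n + 2) → ℝ} {wh : Fin (n + 2) → ℝ}
    (hQ : Q.IsHermitian) (hc : 0 ≤ c) (hη : 0 ≤ η) (hwh : wh ⬝ᵥ wh = 1)
    (hv : ∀ i, vnorm (v i) ≤ V) {a b : Fin (n + 2) → ℝ} (ha : a ⬝ᵥ a = 1) (hb : b ⬝ᵥ b = 1)
    (hab : a ⬝ᵥ b = 0) :
    a ⬝ᵥ (updateMatrix Q D v wh c η *ᵥ a) + b ⬝ᵥ (updateMatrix Q D v wh c η *ᵥ b) ≤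
      c + η * (ℓ * (eigk 0 Q + eigk 1 Q) + ℓ * V ^ 2 + 2 * spec D) := by
  have hwh2 : (wh ⬝ᵥ a) ^ 2 + (wh ⬝ᵥ b) ^ 2 ≤ 1 := by
    simpa only [dotProduct_comm wh, hwh] using sq_dotProduct_add_sq_dotProduct_le_s6 ha hb hab wh
  have hQ2 := add_dotProduct_mulVec_le_eigk_zero_add_eigk_one_s6 hQ ha hb hab
  have hV2 := sum_sq_dotProduct_add_sq_dotProduct_le hv ha hb hab
  have hDa := (abs_le.1 (abs_dotProduct_mulVec_le_spec D ha)).2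
  have hDb := (abs_le.1 (abs_dotProduct_mulVec_le_spec D hb)).2
  have hX : ℓ * (a ⬝ᵥ (Q *ᵥ a)) + ∑ i, (v i ⬝ᵥ a) ^ 2 + a ⬝ᵥ (D *ᵥ a)
      + (ℓ * (b ⬝ᵥ (Q *ᵥ b)) + ∑ i, (v i ⬝ᵥ b) ^ 2 + b ⬝ᵥ (D *ᵥ b))
      ≤ ℓ * (eigk 0 Q + eigk 1 Q) + ℓ * V ^ 2 + 2 * spec D := by
    linarith [mul_le_mul_of_nonneg_left hQ2 (Nat.cast_nonneg ℓ : (0 : ℝ) ≤ ℓ)]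
  rw [dotProduct_mulVec_updateMatrix, dotProduct_mulVec_updateMatrix]
  linarith [mul_le_mul_of_nonneg_left hwh2 hc, mul_le_mul_of_nonneg_left hX hη]

end UpdateMatrixUpperBounds

lemma sq_dotProduct_eq_one_of_fin_one {a b : Fin 1 → ℝ} (ha : a ⬝ᵥ a = 1) (hb : b ⬝ᵥ b = 1) :
    (a ⬝ᵥ b) ^ 2 = 1 := by
  simp only [dotProduct, Finset.univ_unique, Finset.sum_singleton] at *
  rw [mul_pow, sq, sq, ha, hb, one_mul]

theorem correlation_increase_general {d ℓ : ℕ} (hℓ : 0 < ℓ)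
    (Q : Matrix (Fin d) (Fin d) ℝ) (hQ : Q.PosSemidef)
    (x : Fin d → ℝ) (hx : vnorm x = 1) (hxEig : Q.mulVec x = eigk 0 Q • x)
    (v : Fin ℓ → (Fin d → ℝ)) (V : ℝ) (hv : ∀ i, vnorm (v i) ≤ V)
    (Vmat : Matrix (Fin d) (Fin d) ℝ) (hVmat : Vmat = ∑ i, vecMulVec (v i) (v i))
    (D : Matrix (Fin d) (Fin d) ℝ) (hD : D.IsSymm)
    (X : Matrix (Fin d) (Fin d) ℝ) (hX : X = (ℓ : ℝ) • Q + Vmat + D)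
    (wh : Fin d → ℝ) (hwh : vnorm wh = 1) (hCorr : (x ⬝ᵥ wh)^2 ≥ 1/2)
    (η α : ℝ) (hη : 0 < η) (hηα : η * α < 1)
    (W : Matrix (Fin d) (Fin d) ℝ)
    (hW : W = (1 - η * α) • vecMulVec wh wh + η • X)
    (hgapW : eigk 0 W > eigk 1 W)
    (w' : Fin d → ℝ) (hw' : vnorm w' = 1)
    (hEig : W.mulVec w' = eigk 0 W • w') :
    (x ⬝ᵥ w')^2 ≥ (x ⬝ᵥ wh)^2 +
      η * ℓ * ((1 - (x ⬝ᵥ wh)^2) * (eigk 0 Q - eigk 1 Q)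
          - (x ⬝ᵥ wh)^2 * V^2 - 4 * spec D / ℓ)
        / (eigk 0 W - eigk 1 W) := by
  rw [vnorm_eq_one_iff] at hx hwh hw'
  have hs : 0 ≤ spec D := (abs_nonneg _).trans (abs_dotProduct_mulVec_le_spec D hx)
  have hℓs : η * ℓ * (4 * spec D / ℓ) = 4 * (η * spec D) := by field_simp
  rw [ge_iff_le, ← le_sub_iff_add_le', div_le_iff₀ (sub_pos.2 hgapW)]
  obtain _ | _ | n := d
  · simp [dotProduct] at hx
  · -- in dimension one `eigk 1 = 0` and both correlations equal `1`
    have h1 : ∀ A : Matrix (Fin 1) (Fin 1) ℝ, eigk 1 A = 0 := fun A => by simp [eigk]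
    rw [sq_dotProduct_eq_one_of_fin_one hx hw', sq_dotProduct_eq_one_of_fin_one hx hwh, h1, h1]
    nlinarith [mul_nonneg hη.le hs, mul_nonneg hη.le (Nat.cast_nonneg ℓ : (0 : ℝ) ≤ ℓ), sq_nonneg V]
  have hWdef : W = updateMatrix Q D v wh (1 - η * α) η := by rw [hW, hX, hVmat]; rfl
  have hWh : W.IsHermitian :=
    hWdef ▸ isHermitian_updateMatrix hQ.isHermitian (isHermitian_iff_isSymm.2 hD)
  obtain ⟨u, hu, hw'u, hSecond⟩ := exists_dotProduct_mulVec_eq_eigk_one hWh hgapW hEig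
  have hTop : w' ⬝ᵥ (W *ᵥ w') = eigk 0 W := by
    rw [hEig, dotProduct_smul, hw', smul_eq_mul, mul_one]
  have hc : 0 ≤ 1 - η * α := by linarith
  have hquad := dotProduct_mulVec_le_of_mulVec_eq_eigk_zero hWh hgapW hw' hEig hx
  have hlower : (1 - η * α) * (x ⬝ᵥ wh) ^ 2 + η * (ℓ * eigk 0 Q - spec D) ≤ x ⬝ᵥ (W *ᵥ x) := by
    rw [hWdef, dotProduct_comm x wh]
    exact le_dotProduct_mulVec_updateMatrix hη.le hx hxEig
  have hupper : eigk 0 W ≤ 1 - η * α + η * (ℓ * eigk 0 Q + ℓ * V ^ 2 + spec D) := by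
    rw [← hTop, hWdef]
    exact dotProduct_mulVec_updateMatrix_le hQ.isHermitian hc hη.le hwh hv hw'
  have hpair : eigk 0 W + eigk 1 W ≤
      1 - η * α + η * (ℓ * (eigk 0 Q + eigk 1 Q) + ℓ * V ^ 2 + 2 * spec D) := by
    rw [← hTop, ← hSecond, hWdef]
    exact add_dotProduct_mulVec_updateMatrix_le hQ.isHermitian hc hη.le hwh hv hw' hu hw'u
  have hb : (x ⬝ᵥ wh) ^ 2 ≤ 1 := by simpa [hx, hwh] using sq_dotProduct_le x wh
  linarith [mul_le_mul_of_nonneg_left hpair (sub_nonneg.2 hb),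
    mul_le_mul_of_nonneg_left hupper (by linarith : 0 ≤ 2 * (x ⬝ᵥ wh) ^ 2 - 1),
    mul_nonneg hη.le hs]

/-- **Lemma 5 (correlation increase, deterministic form).** -/
theorem correlation_increase {d ℓ : ℕ} (hℓ : 0 < ℓ)
    (Q : Matrix (Fin d) (Fin d) ℝ) (hQ : Q.PosSemidef)
    (x : Fin d → ℝ) (hx : vnorm x = 1) (hxEig : Q.mulVec x = eigk 0 Q • x)
    (v : Fin ℓ → (Fin d → ℝ)) (V : ℝ) (hv : ∀ i, vnorm (v i) ≤ V)
    (Vmat : Matrix (Fin d) (Fin d) ℝ) (hVmat : Vmat = ∑ i, vecMulVec (v i) (v i))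
    (D : Matrix (Fin d) (Fin d) ℝ) (hD : D.IsSymm)
    (X : Matrix (Fin d) (Fin d) ℝ) (hX : X = (ℓ : ℝ) • Q + Vmat + D)
    (wh : Fin d → ℝ) (hwh : vnorm wh = 1) (hCorr : (x ⬝ᵥ wh)^2 ≥ 1/2)
    (η α : ℝ) (hη : 0 < η) (hα : 0 ≤ α) (hηα : η * α < 1)
    (W : Matrix (Fin d) (Fin d) ℝ)
    (hW : W = (1 - η * α) • vecMulVec wh wh + η • X)
    (hgapW : eigk 0 W > eigk 1 W)
    (w' : Fin d → ℝ) (hw' : vnorm w' = 1)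
    (hEig : W.mulVec w' = eigk 0 W • w') :
    (x ⬝ᵥ w')^2 ≥ (x ⬝ᵥ wh)^2 +
      η * ℓ * ((1 - (x ⬝ᵥ wh)^2) * (eigk 0 Q - eigk 1 Q)
          - (x ⬝ᵥ wh)^2 * V^2 - 4 * spec D / ℓ)
        / (eigk 0 W - eigk 1 W) :=
  correlation_increase_general hℓ Q hQ x hx hxEig v V hv Vmat hVmat D hD X hX wh hwh hCorr η α hη
    hηα W hW hgapW w' hw' hEig
end
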